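/- If a is an integer greater than 1, then for every positive integer n with n > 14.4a (equivalently 5n > 72a) there exist at least four prime numbers p, q, r, and s such that n < a·p < 3n/2 < a·q < 2n and simultaneously n < r < 3n/2 < s < 2n. -/

import Mathlib

/-!
Each of the four primes comes from a short interval: for `k = ⌊n / a⌋`, `⌊3n / (2a)⌋`, `n` and
`⌊3n / 2⌋` we need a prime in `(k, 3k/2)` or in `(k, 4k/3)`, and `n > 14.4 a` makes `k ≥ 12`
resp. `k ≥ 18`. Below `303473` an explicit chain of primes, each less than `4/3` of the
previous one, covers these intervals.

For large `k` we use Chebyshev's method. Put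
`E(n) = log (n! (n/30)! / ((n/2)! (n/3)! (n/5)!)) = ∑_{j ≤ n} Λ(j) w(⌊n/j⌋)`, where
`w(m) = m - ⌊m/2⌋ - ⌊m/3⌋ - ⌊m/5⌋ + ⌊m/30⌋` only takes the values `0` and `1` and equals `1`
on `[1, 5]`; hence `ψ(n) - ψ(n/6) ≤ E(n) ≤ ψ(n)`. Stirling's formula gives
`E(n) = A n + O(√n)` with `A = log 2/2 + log 3/3 + log 5/5 - log 30/30 > 0.9`, so
`A n - O(√n) ≤ ψ(n) ≤ (6/5) A n + O(√n)`. If `(k, 4k/3)` held no prime, `ψ(4k/3) - ψ(k)`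
would only count prime powers, which is `O(√k)`; as `4/3 > 6/5` this fails for large `k`.
-/

open ArithmeticFunction hiding log
open Chebyshev Finset Real
open scoped Nat

theorem log_factorial_eq_sum_vonMangoldt (N : ℕ) :
    log N ! = ∑ j ∈ Ioc 0 N, Λ j * (N / j : ℕ) := by
  rw [← sum_Ioc_mul_zeta_eq_sum, vonMangoldt_mul_zeta]
  induction N with
  | zero => simp
  | succ N ih =>
    rw [sum_Ioc_succ_top (Nat.zero_le N), ← ih, Nat.factorial_succ, Nat.cast_mul,
      log_mul (by positivity) (by positivity), log_apply, add_comm]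

theorem log_factorial_div_eq_sum_vonMangoldt (N d : ℕ) :
    log (N / d)! = ∑ j ∈ Ioc 0 N, Λ j * (N / j / d : ℕ) := by
  rw [log_factorial_eq_sum_vonMangoldt,
    ← sum_subset (Ioc_subset_Ioc_right (Nat.div_le_self N d))]
  · exact sum_congr rfl fun j _ ↦ by rw [Nat.div_right_comm]
  · intro j hjN hj
    rw [mem_Ioc] at hjN
    rw [mem_Ioc, not_and, not_le] at hj
    rw [Nat.div_right_comm, Nat.div_eq_of_lt (hj hjN.1), Nat.cast_zero, mul_zero]

def chebyshevWeight (m : ℕ) : ℤ :=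
  m - (m / 2 : ℕ) - (m / 3 : ℕ) - (m / 5 : ℕ) + (m / 30 : ℕ)

theorem chebyshevWeight_nonneg (m : ℕ) : 0 ≤ chebyshevWeight m := by
  unfold chebyshevWeight; omega

theorem chebyshevWeight_le_one (m : ℕ) : chebyshevWeight m ≤ 1 := by
  unfold chebyshevWeight; omega

theorem chebyshevWeight_eq_one {m : ℕ} (h₁ : 1 ≤ m) (h₅ : m ≤ 5) : chebyshevWeight m = 1 := by
  unfold chebyshevWeight; omega

noncomputable def chebyshevSum (n : ℕ) : ℝ :=
  log n ! - log (n / 2)! - log (n / 3)! - log (n / 5)! + log (n / 30)!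

theorem chebyshevSum_eq_sum_vonMangoldt (n : ℕ) :
    chebyshevSum n = ∑ j ∈ Ioc 0 n, Λ j * chebyshevWeight (n / j) := by
  rw [chebyshevSum, log_factorial_div_eq_sum_vonMangoldt n 2,
    log_factorial_div_eq_sum_vonMangoldt n 3, log_factorial_div_eq_sum_vonMangoldt n 5,
    log_factorial_div_eq_sum_vonMangoldt n 30, log_factorial_eq_sum_vonMangoldt,
    ← sum_sub_distrib, ← sum_sub_distrib, ← sum_sub_distrib, ← sum_add_distrib]
  refine sum_congr rfl fun j _ ↦ ?_
  simp only [chebyshevWeight, Int.cast_add, Int.cast_sub, Int.cast_natCast]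
  ring

theorem psi_natCast (n : ℕ) : ψ n = ∑ j ∈ Ioc 0 n, Λ j := by
  simp [psi]

theorem chebyshevSum_le_psi (n : ℕ) : chebyshevSum n ≤ ψ n := by
  rw [chebyshevSum_eq_sum_vonMangoldt, psi_natCast]
  refine sum_le_sum fun j _ ↦ mul_le_of_le_one_right vonMangoldt_nonneg ?_
  exact_mod_cast chebyshevWeight_le_one _

theorem psi_sub_psi_div_six_le_chebyshevSum (n : ℕ) :
    ψ n - ψ (n / 6 : ℕ) ≤ chebyshevSum n := by
  rw [chebyshevSum_eq_sum_vonMangoldt, psi_natCast, psi_natCast,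
    ← sum_Ioc_consecutive _ (Nat.zero_le _) (Nat.div_le_self n 6), add_sub_cancel_left]
  calc ∑ j ∈ Ioc (n / 6) n, Λ j = ∑ j ∈ Ioc (n / 6) n, Λ j * chebyshevWeight (n / j) := by
        refine sum_congr rfl fun j hj ↦ ?_
        rw [mem_Ioc] at hj
        rw [chebyshevWeight_eq_one, Int.cast_one, mul_one]
        · exact (Nat.one_le_div_iff (by omega)).2 hj.2
        · exact Nat.le_of_lt_succ ((Nat.div_lt_iff_lt_mul (by omega)).2 (by omega))
    _ ≤ ∑ j ∈ Ioc 0 n, Λ j * chebyshevWeight (n / j) :=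
        sum_le_sum_of_subset_of_nonneg (Ioc_subset_Ioc_left (Nat.zero_le _)) fun j _ _ ↦
          mul_nonneg vonMangoldt_nonneg (by exact_mod_cast chebyshevWeight_nonneg _)

theorem mul_sub_log_le {a b : ℝ} (ha : 0 < a) (hb : 0 < b) : a * (log b - log a) ≤ b - a := by
  have h := log_le_sub_one_of_pos (div_pos hb ha)
  rw [log_div hb.ne' ha.ne'] at h
  calc a * (log b - log a) ≤ a * (b / a - 1) := mul_le_mul_of_nonneg_left h ha.le
    _ = b - a := by field_simp

theorem log_factorial_le (n : ℕ) : log n ! ≤ n * log n - n + log n / 2 + 1 := by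
  rcases n with _ | n
  · simp
  have h := Stirling.log_stirlingSeq'_antitone (Nat.zero_le n)
  simp only [Function.comp_apply, Nat.succ_eq_add_one, zero_add, Stirling.stirlingSeq_one,
    Stirling.log_stirlingSeq_formula] at h
  rw [log_div (exp_pos 1).ne' (by positivity), log_exp, log_sqrt (by norm_num),
    log_div (by positivity) (exp_pos 1).ne', log_exp, log_mul (by norm_num) (by positivity)] at h
  linarith

theorem sub_le_log_factorial (n : ℕ) : n * log n - n ≤ log n ! := by
  rcases n.eq_zero_or_pos with rfl | hn
  · simp
  have h := Stirling.le_log_factorial_stirling hn.ne'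
  have h₁ : 0 ≤ log n := log_natCast_nonneg n
  have h₂ : 0 ≤ log (2 * π) := log_nonneg (by linarith [pi_gt_three])
  linarith

theorem abs_log_factorial_floor_sub_le {x : ℝ} (hx : 1 ≤ x) :
    |log ⌊x⌋₊ ! - (x * log x - x)| ≤ log x + 1 := by
  set m := ⌊x⌋₊
  have hm₁ : (1 : ℝ) ≤ m := by exact_mod_cast Nat.one_le_floor_iff x |>.2 hx
  have hmx : (m : ℝ) ≤ x := Nat.floor_le (by linarith)
  have hxm : x < m + 1 := Nat.lt_floor_add_one x
  have hlogm : 0 ≤ log m := log_nonneg hm₁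
  have hlog : log m ≤ log x := log_le_log (by linarith) hmx
  have h₁ := mul_sub_log_le (by linarith : (0 : ℝ) < m) (by linarith : 0 < x)
  have h₂ := mul_sub_log_le (by linarith : 0 < x) (by linarith : (0 : ℝ) < m)
  have hup := log_factorial_le m
  have hlow := sub_le_log_factorial m
  rw [abs_le]
  constructor <;> nlinarith

theorem abs_log_factorial_div_sub_le {n d : ℕ} (hd : 0 < d) (hdn : d ≤ n) :
    |log (n / d)! - ((n / d : ℝ) * log (n / d) - n / d)| ≤ log n + 1 := by
  have hx : (1 : ℝ) ≤ n / d := by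
    rw [one_le_div (by positivity)]; exact_mod_cast hdn
  have h := abs_log_factorial_floor_sub_le hx
  rw [Nat.floor_div_eq_div] at h
  refine h.trans (by gcongr; exact div_le_self (Nat.cast_nonneg n) (by exact_mod_cast hd))

noncomputable def chebyshevConst : ℝ := log 2 / 2 + log 3 / 3 + log 5 / 5 - log 30 / 30

theorem nine_tenths_lt_chebyshevConst : 0.9 < chebyshevConst := by
  have h30 : log 30 = log 2 + log 3 + log 5 := by
    rw [← log_mul (by norm_num) (by norm_num), ← log_mul (by norm_num) (by norm_num)]; norm_num
  have key : (27 : ℝ) < log (2 ^ 14 * 3 ^ 9 * 5 ^ 5) := by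
    rw [lt_log_iff_exp_lt (by norm_num), show (27 : ℝ) = (27 : ℕ) by norm_num, ← exp_one_pow]
    calc exp 1 ^ 27 < 2.7182818286 ^ 27 := by gcongr; exact exp_one_lt_d9
      _ ≤ 2 ^ 14 * 3 ^ 9 * 5 ^ 5 := by norm_num
  rw [log_mul (by norm_num) (by norm_num), log_mul (by norm_num) (by norm_num), log_pow, log_pow,
    log_pow] at key
  rw [chebyshevConst, h30]
  push_cast at key
  linarith

theorem abs_chebyshevSum_sub_le {n : ℕ} (hn : 30 ≤ n) :
    |chebyshevSum n - chebyshevConst * n| ≤ 10 * √n := by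
  have h₁ := abs_log_factorial_div_sub_le (d := 1) one_pos (by omega : 1 ≤ n)
  have h₂ := abs_log_factorial_div_sub_le (d := 2) two_pos (by omega : 2 ≤ n)
  have h₃ := abs_log_factorial_div_sub_le (d := 3) three_pos (by omega : 3 ≤ n)
  have h₅ := abs_log_factorial_div_sub_le (d := 5) (by norm_num) (by omega : 5 ≤ n)
  have h₃₀ := abs_log_factorial_div_sub_le (d := 30) (by norm_num) hn
  simp only [Nat.div_one, Nat.cast_one, div_one] at h₁
  have hn₀ : (0 : ℝ) < n := by positivity
  have hmain : (n * log n - n) - (n / 2 * log (n / 2) - n / 2) - (n / 3 * log (n / 3) - n / 3)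
      - (n / 5 * log (n / 5) - n / 5) + (n / 30 * log (n / 30) - n / 30) = chebyshevConst * n := by
    rw [log_div hn₀.ne' (by norm_num), log_div hn₀.ne' (by norm_num),
      log_div hn₀.ne' (by norm_num), log_div hn₀.ne' (by norm_num), chebyshevConst]
    ring
  have hlog : log n + 1 ≤ 2 * √n - 1 := by
    have := log_le_sub_one_of_pos (sqrt_pos.2 hn₀)
    rw [log_sqrt hn₀.le] at this
    linarith
  rw [chebyshevSum, ← hmain]
  rw [abs_le] at h₁ h₂ h₃ h₅ h₃₀ ⊢
  constructor <;> linarith [sqrt_nonneg (n : ℝ)]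

theorem log_four_lt : log 4 < 1.39 := by
  rw [show (4 : ℝ) = 2 ^ 2 by norm_num, log_pow]
  push_cast
  linarith [log_two_lt_d9]

theorem psi_natCast_le (n : ℕ) : ψ n ≤ 6 / 5 * chebyshevConst * n + 30 * √n := by
  induction n using Nat.strong_induction_on with
  | _ n ih =>
  have hA := nine_tenths_lt_chebyshevConst
  rcases lt_or_ge n 30 with hn | hn
  · have hn' : (n : ℝ) ≤ 5.5 * √n := by
      have hsqrt : √n ≤ 5.5 := by
        rw [sqrt_le_left (by norm_num)]
        have : (n : ℝ) < 30 := by exact_mod_cast hn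
        linarith
      simpa only [mul_self_sqrt (Nat.cast_nonneg _)] using
        mul_le_mul_of_nonneg_right hsqrt (sqrt_nonneg (n : ℝ))
    calc ψ n ≤ (log 4 + 4) * n := psi_le_const_mul_self (Nat.cast_nonneg _)
      _ ≤ 5.39 * (5.5 * √n) := by gcongr; linarith [log_four_lt]
      _ ≤ 6 / 5 * chebyshevConst * n + 30 * √n := by
        have : 0 ≤ chebyshevConst * n := mul_nonneg (by linarith) (Nat.cast_nonneg _)
        linarith [sqrt_nonneg (n : ℝ)]
  have hstep := psi_sub_psi_div_six_le_chebyshevSum n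
  have hsum := (abs_le.1 (abs_chebyshevSum_sub_le hn)).2
  have hih := ih (n / 6) (Nat.div_lt_self (by omega) (by norm_num))
  have hdiv : chebyshevConst * (n / 6 : ℕ) ≤ chebyshevConst * (n / 6) :=
    mul_le_mul_of_nonneg_left Nat.cast_div_le (by linarith)
  have hsqrt : 2 * √(n / 6 : ℕ) ≤ √n := by
    rw [le_sqrt (by positivity) (Nat.cast_nonneg _), mul_pow, sq_sqrt (Nat.cast_nonneg _)]
    norm_num
    exact_mod_cast (by omega : 4 * (n / 6) ≤ n)
  linarith [sqrt_nonneg (n : ℝ)]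

theorem theta_natCast_eq_of_forall_not_prime {m n : ℕ} (hmn : m ≤ n)
    (h : ∀ p ∈ Ioc m n, ¬p.Prime) : θ n = θ m := by
  simp only [theta, Nat.floor_natCast, sum_filter]
  rw [← sum_Ioc_consecutive _ (Nat.zero_le m) hmn, add_eq_left]
  exact sum_eq_zero fun p hp ↦ if_neg (h p hp)

theorem psi_sub_theta_le_three_mul_sqrt {x : ℝ} (hx : 1 ≤ x) :
    ψ x - θ x ≤ 3 * (log 4 + 4) * √x := by
  have hroot (k : ℝ) (hk : 2 ≤ k) : ψ (x ^ k⁻¹) ≤ (log 4 + 4) * √x := by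
    grw [psi_le_const_mul_self (by positivity), sqrt_eq_rpow x]
    gcongr
    rw [one_div]
    exact inv_anti₀ two_pos hk
  linarith [psi_sub_theta_le_psi_add_psi_add_psi x, hroot 2 le_rfl, hroot 3 (by norm_num),
    hroot 5 (by norm_num)]

theorem exists_prime_lt_and_three_mul_lt_four_mul_of_large {n : ℕ} (hn : 300000 ≤ n) :
    ∃ p, p.Prime ∧ n < p ∧ 3 * p < 4 * n := by
  by_contra! hcon
  set K := (4 * n - 1) / 3
  have hθ : θ K = θ n := theta_natCast_eq_of_forall_not_prime (by omega) fun p hp hp' ↦ by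
    have := hcon p hp' (mem_Ioc.1 hp).1
    have := (mem_Ioc.1 hp).2
    omega
  have hchebyshev : chebyshevConst * K - 10 * √K ≤
      6 / 5 * chebyshevConst * n + 30 * √n + 3 * (log 4 + 4) * √K :=
    calc chebyshevConst * K - 10 * √K ≤ chebyshevSum K := by
          linarith [(abs_le.1 (abs_chebyshevSum_sub_le (n := K) (by omega))).1]
      _ ≤ ψ K := chebyshevSum_le_psi K
      _ ≤ θ K + 3 * (log 4 + 4) * √K := by
          have hK : (1 : ℝ) ≤ K := by exact_mod_cast (by omega : 1 ≤ K)
          linarith [psi_sub_theta_le_three_mul_sqrt hK]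
      _ ≤ ψ n + 3 * (log 4 + 4) * √K := by rw [hθ]; gcongr; exact theta_le_psi n
      _ ≤ _ := by gcongr; exact psi_natCast_le n
  have hA := nine_tenths_lt_chebyshevConst
  have hAK : chebyshevConst * (4 * n) ≤ chebyshevConst * (3 * K + 3) := by
    gcongr
    exact_mod_cast (by omega : 4 * n ≤ 3 * K + 3)
  have hlog4 : (log 4 + 4) * √K ≤ 5.39 * √K := by gcongr; linarith [log_four_lt]
  have hsqrtK : 6 * √K ≤ 7 * √n := by
    rw [← pow_le_pow_iff_left₀ (by positivity) (by positivity) two_ne_zero, mul_pow, mul_pow,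
      sq_sqrt (Nat.cast_nonneg _), sq_sqrt (Nat.cast_nonneg _)]
    exact_mod_cast (by omega : 6 ^ 2 * K ≤ 7 ^ 2 * n)
  have hsqrtn : 547 ≤ √n := by
    rw [le_sqrt (by norm_num) (Nat.cast_nonneg _)]
    exact_mod_cast (by omega : 547 ^ 2 ≤ n)
  have hn' : 547 * √n ≤ n := by
    simpa only [mul_self_sqrt (Nat.cast_nonneg _)] using
      mul_le_mul_of_nonneg_right hsqrtn (sqrt_nonneg (n : ℝ))
  have hAn : 0 ≤ (chebyshevConst - 0.9) * (2 / 15 * n - 1) := by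
    have : (300000 : ℝ) ≤ n := by exact_mod_cast hn
    exact mul_nonneg (by linarith) (by linarith)
  linarith

theorem exists_prime_of_isChain {b c k : ℕ} {L : List ℕ} (hne : L ≠ [])
    (hprime : ∀ p ∈ L, p.Prime) (hchain : L.IsChain fun p q ↦ b * q < c * p)
    (hhead : b * L.head hne < c * k) (hlast : k < L.getLast hne) :
    ∃ p, p.Prime ∧ k < p ∧ b * p < c * k := by
  induction L with
  | nil => exact absurd rfl hne
  | cons p L ih =>
    rcases L with _ | ⟨q, L⟩
    · exact ⟨p, hprime p List.mem_cons_self, hlast, hhead⟩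
    rcases lt_or_ge k p with hkp | hpk
    · exact ⟨p, hprime p List.mem_cons_self, hkp, hhead⟩
    rw [List.isChain_cons_cons] at hchain
    refine ih (List.cons_ne_nil q L) (fun r hr ↦ hprime r (List.mem_cons_of_mem p hr)) hchain.2
      ?_ (by rwa [List.getLast_cons_cons] at hlast)
    have : c * p ≤ c * k := Nat.mul_le_mul_left c hpk
    exact hchain.1.trans_le this

theorem exists_prime_lt_and_three_mul_lt_four_mul {n : ℕ} (hn : 18 ≤ n) :
    ∃ p, p.Prime ∧ n < p ∧ 3 * p < 4 * n := by
  rcases lt_or_ge n 303473 with h | h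
  · refine exists_prime_of_isChain (L := [23, 29, 37, 47, 61, 79, 103, 137, 181, 241, 317, 421,
      557, 739, 983, 1307, 1741, 2311, 3079, 4099, 5449, 7253, 9661, 12853, 17137, 22817, 30403,
      40531, 54037, 72047, 96059, 128053, 170711, 227611, 303473]) (List.cons_ne_nil _ _) ?_
      (by decide) (by simp only [List.head_cons]; omega) h
    simp only [List.mem_cons, List.not_mem_nil, or_false, forall_eq_or_imp, forall_eq]
    norm_num
  · exact exists_prime_lt_and_three_mul_lt_four_mul_of_large (by omega)

theorem exists_prime_lt_and_two_mul_lt_three_mul {n : ℕ} (hn : 12 ≤ n) :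
    ∃ p, p.Prime ∧ n < p ∧ 2 * p < 3 * n := by
  rcases lt_or_ge n 18 with h | h
  · exact exists_prime_of_isChain (L := [17, 19]) (List.cons_ne_nil _ _) (by norm_num)
      (by decide) (by simp only [List.head_cons]; omega) (by simp; omega)
  · obtain ⟨p, hp, hnp, hpn⟩ := exists_prime_lt_and_three_mul_lt_four_mul h
    exact ⟨p, hp, hnp, by omega⟩

theorem exists_prime_mul_between_one_and_three_halves {a n : ℕ} (ha : 0 < a) (h : 12 * a ≤ n) :
    ∃ p, p.Prime ∧ 2 * n < 2 * (a * p) ∧ 2 * (a * p) < 3 * n := by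
  obtain ⟨p, hp, hkp, hpk⟩ :=
    exists_prime_lt_and_two_mul_lt_three_mul ((Nat.le_div_iff_mul_le ha).2 (by linarith))
  refine ⟨p, hp, ?_, ?_⟩
  · have := Nat.lt_mul_div_succ n ha
    have : a * (n / a + 1) ≤ a * p := Nat.mul_le_mul_left a hkp
    omega
  · have := Nat.mul_div_le n a
    have : a * (2 * p) < a * (3 * (n / a)) := Nat.mul_lt_mul_of_pos_left hpk ha
    linarith

theorem exists_prime_mul_between_three_halves_and_two {a n : ℕ} (ha : 0 < a) (h : 12 * a ≤ n) :
    ∃ q, q.Prime ∧ 3 * n < 2 * (a * q) ∧ 2 * (a * q) < 4 * n := by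
  obtain ⟨q, hq, hkq, hqk⟩ := exists_prime_lt_and_three_mul_lt_four_mul (n := 3 * n / (2 * a))
    ((Nat.le_div_iff_mul_le (by omega)).2 (by linarith))
  refine ⟨q, hq, ?_, ?_⟩
  · have := Nat.lt_mul_div_succ (3 * n) (by omega : 0 < 2 * a)
    have : 2 * a * (3 * n / (2 * a) + 1) ≤ 2 * a * q := Nat.mul_le_mul_left _ hkq
    linarith
  · have := Nat.mul_div_le (3 * n) (2 * a)
    have : 2 * a * (3 * q) < 2 * a * (4 * (3 * n / (2 * a))) :=
      Nat.mul_lt_mul_of_pos_left hqk (by omega)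
    linarith

theorem exists_four_primes_general (a : ℕ) (ha : 1 < a) (n : ℕ)
    (h : 5 * n > 72 * a) :
    ∃ p q r s : ℕ, p.Prime ∧ q.Prime ∧ r.Prime ∧ s.Prime ∧
      2 * n < 2 * (a * p) ∧ 2 * (a * p) < 3 * n ∧
      3 * n < 2 * (a * q) ∧ 2 * (a * q) < 4 * n ∧
      2 * n < 2 * r ∧ 2 * r < 3 * n ∧ 3 * n < 2 * s ∧ 2 * s < 4 * n := by
  have h12 : 12 * a ≤ n := by omega
  obtain ⟨p, hp, hp₁, hp₂⟩ := exists_prime_mul_between_one_and_three_halves (by omega) h12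
  obtain ⟨q, hq, hq₁, hq₂⟩ := exists_prime_mul_between_three_halves_and_two (by omega) h12
  obtain ⟨r, hr, hr₁, hr₂⟩ :=
    exists_prime_mul_between_one_and_three_halves (a := 1) (n := n) one_pos (by omega)
  obtain ⟨s, hs, hs₁, hs₂⟩ :=
    exists_prime_mul_between_three_halves_and_two (a := 1) (n := n) one_pos (by omega)
  simp only [one_mul] at hr₁ hr₂ hs₁ hs₂
  exact ⟨p, q, r, s, hp, hq, hr, hs, hp₁, hp₂, hq₁, hq₂, hr₁, hr₂, hs₁, hs₂⟩

theorem exists_four_primes (a : ℕ) (ha : 1 < a) (n : ℕ) (hn : 0 < n)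
    (h : 5 * n > 72 * a) :
    ∃ p q r s : ℕ, p.Prime ∧ q.Prime ∧ r.Prime ∧ s.Prime ∧
      2 * n < 2 * (a * p) ∧ 2 * (a * p) < 3 * n ∧
      3 * n < 2 * (a * q) ∧ 2 * (a * q) < 4 * n ∧
      2 * n < 2 * r ∧ 2 * r < 3 * n ∧ 3 * n < 2 * s ∧ 2 * s < 4 * n :=
  exists_four_primes_general a ha n h
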